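/- Let m ≥ 2, n ≥ 2, and let f be a maximal IC-coloring of K_{1(n),m} with vertices listed as u_1, …, u_{m+n} so that f(u_i) < f(u_{i+1}) for all i. Set s_0 = 0, s_i = f(u_i), and r_i = s_i − ∑_{j=0}^{i−1} s_j for 1 ≤ i ≤ m+n. Then r_i ≤ 1 for all i. -/

import Mathlib

/-
Let `T = f(u₁) + … + f(u_{i-1})`. Since `f(u_i) > 0`, `T + 1` is at most the total weight, so
the IC-coloring realizes it as the weight of some vertex set; that set cannot lie inside
`{u₁, …, u_{i-1}}` (whose weight is only `T`), so it contains some `u_j` with `j ≥ i`, and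
monotonicity gives `f(u_i) ≤ f(u_j) ≤ T + 1`, i.e. `r_i ≤ 1`.
-/

/-- The join `H₀ ∨ H₁` of two graphs: all edges of `H₀`, all edges of `H₁`, and all
pairs with one endpoint in each. -/
def graphJoin {α β : Type*} (G : SimpleGraph α) (H : SimpleGraph β) :
    SimpleGraph (α ⊕ β) where
  Adj x y :=
    match x, y with
    | Sum.inl a, Sum.inl b => G.Adj a b
    | Sum.inr a, Sum.inr b => H.Adj a b
    | Sum.inl _, Sum.inr _ => True
    | Sum.inr _, Sum.inl _ => True
  symm := ⟨by
    rintro (a | a) (b | b) h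
    · exact G.symm.symm _ _ h
    · trivial
    · trivial
    · exact H.symm.symm _ _ h⟩
  loopless := ⟨by
    rintro (a | a) h
    · exact G.loopless.irrefl a h
    · exact H.loopless.irrefl a h⟩

/-- A coloring `f : V(G) → ℕ` (positive-valued) is an IC-coloring if every integer
`k` with `1 ≤ k ≤ f(G)` is the `f`-sum of some nonempty vertex subset inducing a
connected subgraph. -/
def IsICColoring {α : Type*} [Fintype α] (G : SimpleGraph α) (f : α → ℕ) : Prop :=
  (∀ v, 0 < f v) ∧
    ∀ k : ℕ, 1 ≤ k → k ≤ ∑ v, f v →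
      ∃ S : Finset α, S.Nonempty ∧ (G.induce (S : Set α)).Connected ∧
        ∑ v ∈ S, f v = k

/-- The IC-index `M(G)`: the maximum of `f(G)` over all IC-colorings `f` of `G`. -/
noncomputable def ICIndex {α : Type*} [Fintype α] (G : SimpleGraph α) : ℕ :=
  sSup {t | ∃ f : α → ℕ, IsICColoring G f ∧ ∑ v, f v = t}

/-- `K_{1(n),m} = O_m ∨ K_n`: the complete `(n+1)`-partite graph with `n` parts of
size one and one part (`V₀ = Fin m`, the left summand) of size `m`. -/
def K1nm (m n : ℕ) : SimpleGraph (Fin m ⊕ Fin n) :=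
  graphJoin (⊥ : SimpleGraph (Fin m)) (⊤ : SimpleGraph (Fin n))

theorem IsICColoring.exists_notMem_le_sum_add_one {α : Type*} [Fintype α] {G : SimpleGraph α}
    {f : α → ℕ} (hf : IsICColoring G f) {A : Finset α} (hA : ∑ v ∈ A, f v < ∑ v, f v) :
    ∃ v ∉ A, f v ≤ ∑ w ∈ A, f w + 1 := by
  obtain ⟨S, -, -, hS⟩ := hf.2 (∑ v ∈ A, f v + 1) (by omega) hA
  have hSA : ¬S ⊆ A := fun h => by
    have := Finset.sum_le_sum_of_subset (f := f) h
    omega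
  obtain ⟨v, hvS, hvA⟩ := Finset.not_subset.mp hSA
  exact ⟨v, hvA, hS ▸ Finset.single_le_sum (fun _ _ => Nat.zero_le _) hvS⟩

theorem IsICColoring.le_sum_Ico_add_one {α : Type*} [Fintype α] {G : SimpleGraph α}
    {f : α → ℕ} (hf : IsICColoring G f) {N : ℕ} {u : ℕ → α}
    (hu : Set.BijOn u (Set.Icc 1 N) Set.univ) (hmono : StrictMonoOn (f ∘ u) (Set.Icc 1 N))
    {i : ℕ} (hi : i ∈ Set.Icc 1 N) :
    f (u i) ≤ ∑ j ∈ Finset.Ico 1 i, f (u j) + 1 := by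
  classical
  have hIco : ∀ j ∈ Finset.Ico 1 i, j ∈ Set.Icc 1 N := fun j hj => by
    have := Finset.mem_Ico.1 hj
    exact ⟨this.1, by have := hi.2; omega⟩
  set A := (Finset.Ico 1 i).image u
  have hsumA : ∑ v ∈ A, f v = ∑ j ∈ Finset.Ico 1 i, f (u j) :=
    Finset.sum_image fun a ha b hb hab => hu.injOn (hIco a ha) (hIco b hb) hab
  have hiA : u i ∉ A := by
    rintro hi'
    obtain ⟨j, hj, hji⟩ := Finset.mem_image.1 hi'
    have hj_eq : j = i := hu.injOn (hIco j hj) hi hji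
    have hj_lt : j < i := (Finset.mem_Ico.1 hj).2
    omega
  have hA : ∑ v ∈ A, f v < ∑ v, f v :=
    calc ∑ v ∈ A, f v < ∑ v ∈ insert (u i) A, f v := by
          rw [Finset.sum_insert hiA]
          exact Nat.lt_add_of_pos_left (hf.1 (u i))
      _ ≤ ∑ v, f v := Finset.sum_le_univ_sum_of_nonneg fun _ => Nat.zero_le _
  obtain ⟨v, hvA, hv⟩ := hf.exists_notMem_le_sum_add_one hA
  obtain ⟨j, hj, rfl⟩ := hu.surjOn (Set.mem_univ v)
  have hij : i ≤ j := by
    by_contra hji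
    exact hvA (Finset.mem_image_of_mem _ (Finset.mem_Ico.2 ⟨hj.1, by omega⟩))
  calc f (u i) ≤ f (u j) := hmono.monotoneOn hi hj hij
    _ ≤ _ := hsumA ▸ hv

theorem stmt_13_general (m n : ℕ)
    (f : Fin m ⊕ Fin n → ℕ) (hf : IsICColoring (K1nm m n) f)
    (u : ℕ → Fin m ⊕ Fin n) (hu : Set.BijOn u (Set.Icc 1 (m + n)) Set.univ)
    (hmono : ∀ i, 1 ≤ i → i + 1 ≤ m + n → f (u i) < f (u (i + 1)))
    (s r : ℕ → ℤ) (hs0 : s 0 = 0)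
    (hs : ∀ i, 1 ≤ i → i ≤ m + n → s i = f (u i))
    (hr : ∀ i, 1 ≤ i → i ≤ m + n → r i = s i - ∑ j ∈ Finset.range i, s j) :
    ∀ i, 1 ≤ i → i ≤ m + n → r i ≤ 1 := by
  intro i hi1 hi2
  have hstrict : StrictMonoOn (f ∘ u) (Set.Icc 1 (m + n)) :=
    strictMonoOn_of_lt_add_one Set.ordConnected_Icc fun a _ ha ha1 => hmono a ha.1 ha1.2
  have hsum : ∑ j ∈ Finset.range i, s j = ∑ j ∈ Finset.Ico 1 i, (f (u j) : ℤ) := by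
    rw [Finset.sum_range_eq_add_Ico _ (by omega), hs0, zero_add]
    refine Finset.sum_congr rfl fun j hj => ?_
    have := Finset.mem_Ico.1 hj
    exact hs j this.1 (by omega)
  have key : (f (u i) : ℤ) ≤ ∑ j ∈ Finset.Ico 1 i, (f (u j) : ℤ) + 1 := by
    exact_mod_cast hf.le_sum_Ico_add_one hu hstrict ⟨hi1, hi2⟩
  rw [hr i hi1 hi2, hs i hi1 hi2, hsum]
  linarith

/-- Let `m, n ≥ 2` and `f` a maximal IC-coloring of `K_{1(n),m}`,
with vertices listed as `u 1, …, u (m+n)` so that `f` is strictly increasing along the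
list.  With `s 0 = 0`, `s i = f (u i)` and `r i = s i − ∑_{j=0}^{i−1} s j`, we have
`r i ≤ 1` for all `1 ≤ i ≤ m + n`. -/
theorem stmt_13 (m n : ℕ) (hm : 2 ≤ m) (hn : 2 ≤ n)
    (f : Fin m ⊕ Fin n → ℕ) (hf : IsICColoring (K1nm m n) f)
    (hmax : ∑ v, f v = ICIndex (K1nm m n))
    (u : ℕ → Fin m ⊕ Fin n) (hu : Set.BijOn u (Set.Icc 1 (m + n)) Set.univ)
    (hmono : ∀ i, 1 ≤ i → i + 1 ≤ m + n → f (u i) < f (u (i + 1)))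
    (s r : ℕ → ℤ) (hs0 : s 0 = 0)
    (hs : ∀ i, 1 ≤ i → i ≤ m + n → s i = f (u i))
    (hr : ∀ i, 1 ≤ i → i ≤ m + n → r i = s i - ∑ j ∈ Finset.range i, s j) :
    ∀ i, 1 ≤ i → i ≤ m + n → r i ≤ 1 :=
  stmt_13_general m n f hf u hu hmono s r hs0 hs hr
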